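/- Assume θ ≥ 0 and a > 0, and additionally a < θ whenever θ > 0. Then for every c ∈ S¹_θ the following set identity holds inside Ω: d̂(a) ∩ T_c(q̂(a)) = ĉ(a) if c = 0; d̂(a) ∩ T_c(q̂(a)) = K(a) if c = [a]; and d̂(a) ∩ T_c(q̂(a)) = ∅ for all other c. (Under the stated hypotheses [a] ≠ 0 in S¹_θ, so the three cases are mutually exclusive.) -/

import Mathlib

/-!
Fix `θ ≥ 0` and let `S¹_θ := ℝ/θℤ` be `AddCircle θ` (for `θ = 0` this is `ℝ`).
A point of the ambient space `ℝ × S¹_θ × ℝ × ℝ` is written `(u, t, υ, τ)`; all the sets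
below are contained in `Ω = {τ > 0}`.  These are the conified cone sets `ĉ(a)`, `d̂(a)`,
`q̂(a)`, and `K(a) = closure of l̂(a)` of the paper, together with the translation `T_c`.
-/

/-- The set `ĉ(a) = {(0,0,τυ,τ) | -1 ≤ υ ≤ 0, τ > 0} ∪ {(u,0,0,τ) | 0 ≤ u ≤ a, τ > 0}
∪ {(u,[u],-τ,τ) | 0 ≤ u ≤ a, τ > 0}`. -/
def chat (θ a : ℝ) : Set (ℝ × AddCircle θ × ℝ × ℝ) :=
  {q | ∃ υ τ : ℝ, 0 < τ ∧ -1 ≤ υ ∧ υ ≤ 0 ∧ q = (0, 0, τ * υ, τ)} ∪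
    {q | ∃ u τ : ℝ, 0 < τ ∧ 0 ≤ u ∧ u ≤ a ∧ q = (u, 0, 0, τ)} ∪
    {q | ∃ u τ : ℝ, 0 < τ ∧ 0 ≤ u ∧ u ≤ a ∧ q = (u, (u : AddCircle θ), -τ, τ)}

/-- The set `d̂(a) = ĉ(a) ∪ {(a,0,υ,τ) | υ > 0, τ > 0} ∪ {(a,[a],υ,τ) | υ > -τ, τ > 0}`. -/
def dhat (θ a : ℝ) : Set (ℝ × AddCircle θ × ℝ × ℝ) :=
  chat θ a ∪ {q | ∃ υ τ : ℝ, 0 < τ ∧ 0 < υ ∧ q = (a, 0, υ, τ)} ∪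
    {q | ∃ υ τ : ℝ, 0 < τ ∧ -τ < υ ∧ q = (a, (a : AddCircle θ), υ, τ)}

/-- The set `q̂(a) = ĉ(a) ∪ {(a,0,υ,τ) | υ < 0, τ > 0} ∪ {(a,[a],υ,τ) | υ < -τ, τ > 0}`. -/
def qhat (θ a : ℝ) : Set (ℝ × AddCircle θ × ℝ × ℝ) :=
  chat θ a ∪ {q | ∃ υ τ : ℝ, 0 < τ ∧ υ < 0 ∧ q = (a, 0, υ, τ)} ∪
    {q | ∃ υ τ : ℝ, 0 < τ ∧ υ < -τ ∧ q = (a, (a : AddCircle θ), υ, τ)}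

/-- The set `K(a) = {(a,[a],υ,τ) | -τ ≤ υ ≤ 0, τ > 0}`, the closure in `Ω` of `l̂(a)`. -/
def Kset (θ a : ℝ) : Set (ℝ × AddCircle θ × ℝ × ℝ) :=
  {q | ∃ υ τ : ℝ, 0 < τ ∧ -τ ≤ υ ∧ υ ≤ 0 ∧ q = (a, (a : AddCircle θ), υ, τ)}

/-- The translation `T_c : (u, t, υ, τ) ↦ (u, t + c, υ, τ)`. -/
noncomputable def coneTranslate (θ : ℝ) (c : AddCircle θ) (q : ℝ × AddCircle θ × ℝ × ℝ) :
    ℝ × AddCircle θ × ℝ × ℝ :=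
  (q.1, q.2.1 + c, q.2.2.1, q.2.2.2)

/-!
On `ĉ(a)` one has `-τ ≤ υ ≤ 0`, and the angle `t` is a function of `(u, υ, τ)`: it is `[u]` when
`υ < 0` and `0` otherwise. The rays that `d̂(a)` adds over `u = a` lie in `υ > 0` or `υ > -τ`,
those of `q̂(a)` in `υ < 0` or `υ < -τ`. A point of `d̂(a) ∩ T_c(q̂(a))` carries two angles `t` and
`t - c` over the same `(u, υ, τ)`; comparing them leaves only `c = 0` with the point in `ĉ(a)`, or
`c = [a]` with the point in `K(a)`. The two cases differ because `[a] ≠ 0` for `0 < a < θ`.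
-/

lemma AddCircle.coe_ne_zero_of_pos_of_lt {θ a : ℝ} (hθ : 0 ≤ θ) (ha : 0 < a)
    (haθ : 0 < θ → a < θ) : (a : AddCircle θ) ≠ 0 := by
  rw [Ne, AddCircle.coe_eq_zero_iff]
  rintro ⟨n, rfl⟩
  rw [zsmul_eq_mul] at ha haθ
  rcases hθ.eq_or_lt with rfl | hθ
  · simp at ha
  · have hn1 : (n : ℝ) < 1 := (mul_lt_iff_lt_one_left hθ).1 (haθ hθ)
    have hn0 : (0 : ℝ) < n := pos_of_mul_pos_left ha hθ.le
    norm_cast at hn0 hn1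
    omega

section ConeSets

variable {θ a u v τ : ℝ} {t c : AddCircle θ}

lemma mem_coneTranslate_image_iff {S : Set (ℝ × AddCircle θ × ℝ × ℝ)} :
    (u, t, v, τ) ∈ coneTranslate θ c '' S ↔ (u, t - c, v, τ) ∈ S := by
  constructor
  · rintro ⟨⟨u', t', v', τ'⟩, hS, h⟩
    simp only [coneTranslate, Prod.mk.injEq] at h
    obtain ⟨rfl, rfl, rfl, rfl⟩ := h
    simpa using hS
  · exact fun hS => ⟨_, hS, by simp [coneTranslate]⟩

lemma mem_chat_iff :
    (u, t, v, τ) ∈ chat θ a ↔ 0 < τ ∧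
      (u = 0 ∧ t = 0 ∧ -τ ≤ v ∧ v ≤ 0 ∨
        0 ≤ u ∧ u ≤ a ∧ t = 0 ∧ v = 0 ∨
        0 ≤ u ∧ u ≤ a ∧ t = u ∧ v = -τ) := by
  simp only [chat, Set.mem_union, Set.mem_ofPred_eq, Prod.mk.injEq]
  constructor
  · rintro ((⟨s, τ, hτ, hs₁, hs₂, rfl, rfl, rfl, rfl⟩ | ⟨u, τ, hτ, hu₀, hua, rfl, rfl, rfl, rfl⟩) |
      ⟨u, τ, hτ, hu₀, hua, rfl, rfl, rfl, rfl⟩)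
    · exact ⟨hτ, Or.inl ⟨rfl, rfl, by nlinarith, by nlinarith⟩⟩
    · exact ⟨hτ, Or.inr (Or.inl ⟨hu₀, hua, rfl, rfl⟩)⟩
    · exact ⟨hτ, Or.inr (Or.inr ⟨hu₀, hua, rfl, rfl⟩)⟩
  · rintro ⟨hτ, ⟨rfl, rfl, hv₁, hv₂⟩ | ⟨hu₀, hua, rfl, rfl⟩ | ⟨hu₀, hua, rfl, rfl⟩⟩
    · refine Or.inl (Or.inl ⟨v / τ, τ, hτ, ?_, ?_, rfl, rfl, (mul_div_cancel₀ v hτ.ne').symm, rfl⟩)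
      · rwa [le_div_iff₀ hτ, neg_one_mul]
      · exact div_nonpos_of_nonpos_of_nonneg hv₂ hτ.le
    · exact Or.inl (Or.inr ⟨u, τ, hτ, hu₀, hua, rfl, rfl, rfl, rfl⟩)
    · exact Or.inr ⟨u, τ, hτ, hu₀, hua, rfl, rfl, rfl, rfl⟩

lemma mem_dhat_iff :
    (u, t, v, τ) ∈ dhat θ a ↔ (u, t, v, τ) ∈ chat θ a ∨
      0 < τ ∧ u = a ∧ (t = 0 ∧ 0 < v ∨ t = a ∧ -τ < v) := by
  simp only [dhat, Set.mem_union, Set.mem_ofPred_eq, Prod.mk.injEq]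
  constructor
  · rintro ((h | ⟨v, τ, hτ, hv, rfl, rfl, rfl, rfl⟩) | ⟨v, τ, hτ, hv, rfl, rfl, rfl, rfl⟩)
    exacts [Or.inl h, Or.inr ⟨hτ, rfl, Or.inl ⟨rfl, hv⟩⟩, Or.inr ⟨hτ, rfl, Or.inr ⟨rfl, hv⟩⟩]
  · rintro (h | ⟨hτ, rfl, ⟨rfl, hv⟩ | ⟨rfl, hv⟩⟩)
    exacts [Or.inl (Or.inl h), Or.inl (Or.inr ⟨v, τ, hτ, hv, rfl, rfl, rfl, rfl⟩),
      Or.inr ⟨v, τ, hτ, hv, rfl, rfl, rfl, rfl⟩]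

lemma mem_qhat_iff :
    (u, t, v, τ) ∈ qhat θ a ↔ (u, t, v, τ) ∈ chat θ a ∨
      0 < τ ∧ u = a ∧ (t = 0 ∧ v < 0 ∨ t = a ∧ v < -τ) := by
  simp only [qhat, Set.mem_union, Set.mem_ofPred_eq, Prod.mk.injEq]
  constructor
  · rintro ((h | ⟨v, τ, hτ, hv, rfl, rfl, rfl, rfl⟩) | ⟨v, τ, hτ, hv, rfl, rfl, rfl, rfl⟩)
    exacts [Or.inl h, Or.inr ⟨hτ, rfl, Or.inl ⟨rfl, hv⟩⟩, Or.inr ⟨hτ, rfl, Or.inr ⟨rfl, hv⟩⟩]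
  · rintro (h | ⟨hτ, rfl, ⟨rfl, hv⟩ | ⟨rfl, hv⟩⟩)
    exacts [Or.inl (Or.inl h), Or.inl (Or.inr ⟨v, τ, hτ, hv, rfl, rfl, rfl, rfl⟩),
      Or.inr ⟨v, τ, hτ, hv, rfl, rfl, rfl, rfl⟩]

lemma mem_Kset_iff :
    (u, t, v, τ) ∈ Kset θ a ↔ 0 < τ ∧ u = a ∧ t = a ∧ -τ ≤ v ∧ v ≤ 0 := by
  simp only [Kset, Set.mem_ofPred_eq, Prod.mk.injEq]
  constructor
  · rintro ⟨v, τ, hτ, hv₁, hv₂, rfl, rfl, rfl, rfl⟩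
    exact ⟨hτ, rfl, rfl, hv₁, hv₂⟩
  · rintro ⟨hτ, rfl, rfl, hv₁, hv₂⟩
    exact ⟨v, τ, hτ, hv₁, hv₂, rfl, rfl, rfl, rfl⟩

lemma neg_le_and_nonpos_of_mem_chat (h : (u, t, v, τ) ∈ chat θ a) : -τ ≤ v ∧ v ≤ 0 := by
  obtain ⟨hτ, ⟨-, -, hv₁, hv₂⟩ | ⟨-, -, -, rfl⟩ | ⟨-, -, -, rfl⟩⟩ := mem_chat_iff.1 h
  exacts [⟨hv₁, hv₂⟩, ⟨by linarith, le_rfl⟩, ⟨le_rfl, by linarith⟩]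

lemma eq_zero_of_mem_chat (h : (u, t, v, τ) ∈ chat θ a) (hv : -τ < v) : t = 0 := by
  obtain ⟨-, ⟨-, rfl, -⟩ | ⟨-, -, rfl, -⟩ | ⟨-, -, -, rfl⟩⟩ := mem_chat_iff.1 h
  exacts [rfl, rfl, absurd hv (lt_irrefl _)]

lemma eq_coe_of_mem_chat (h : (u, t, v, τ) ∈ chat θ a) (hv : v < 0) : t = u := by
  obtain ⟨-, ⟨rfl, rfl, -⟩ | ⟨-, -, -, rfl⟩ | ⟨-, -, rfl, -⟩⟩ := mem_chat_iff.1 h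
  exacts [by simp, absurd hv (lt_irrefl _), rfl]

lemma eq_of_mem_chat_of_mem_chat {t' : AddCircle θ} (h : (u, t, v, τ) ∈ chat θ a)
    (h' : (u, t', v, τ) ∈ chat θ a) : t = t' := by
  rcases lt_or_ge v 0 with hv | hv
  · rw [eq_coe_of_mem_chat h hv, eq_coe_of_mem_chat h' hv]
  · have hτv : -τ < v := by linarith [(mem_chat_iff.1 h).1]
    rw [eq_zero_of_mem_chat h hτv, eq_zero_of_mem_chat h' hτv]

lemma Kset_subset_dhat_inter_translate_qhat (ha : 0 ≤ a) :
    Kset θ a ⊆ dhat θ a ∩ coneTranslate θ a '' qhat θ a := by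
  rintro ⟨u, t, v, τ⟩ h
  obtain ⟨hτ, rfl, rfl, hv₁, hv₂⟩ := mem_Kset_iff.1 h
  rw [Set.mem_inter_iff, mem_coneTranslate_image_iff, sub_self, mem_dhat_iff, mem_qhat_iff]
  constructor
  · rcases hv₁.eq_or_lt with hv | hv
    · exact Or.inl (mem_chat_iff.2 ⟨hτ, Or.inr (Or.inr ⟨ha, le_rfl, rfl, hv.symm⟩)⟩)
    · exact Or.inr ⟨hτ, rfl, Or.inr ⟨rfl, hv⟩⟩
  · rcases hv₂.eq_or_lt with hv | hv
    · exact Or.inl (mem_chat_iff.2 ⟨hτ, Or.inr (Or.inl ⟨ha, le_rfl, rfl, hv⟩)⟩)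
    · exact Or.inr ⟨hτ, rfl, Or.inl ⟨rfl, hv⟩⟩

lemma mem_dhat_inter_translate_qhat_iff (ha : 0 ≤ a) :
    (u, t, v, τ) ∈ dhat θ a ∩ coneTranslate θ c '' qhat θ a ↔
      c = 0 ∧ (u, t, v, τ) ∈ chat θ a ∨ c = a ∧ (u, t, v, τ) ∈ Kset θ a := by
  constructor
  · rw [Set.mem_inter_iff, mem_coneTranslate_image_iff, mem_dhat_iff, mem_qhat_iff, mem_Kset_iff]
    rintro ⟨hd | ⟨hτ, rfl, hd⟩, hq | ⟨hτ', hu, hq⟩⟩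
    · exact Or.inl ⟨sub_eq_self.1 (eq_of_mem_chat_of_mem_chat hd hq).symm, hd⟩
    · subst hu
      obtain ⟨hv₁, hv₂⟩ := neg_le_and_nonpos_of_mem_chat hd
      obtain ⟨hq, hv⟩ : t - c = 0 ∧ v < 0 := hq.resolve_right fun h => by linarith [h.2]
      have ht := eq_coe_of_mem_chat hd hv
      rw [ht, sub_eq_zero] at hq
      exact Or.inr ⟨hq.symm, hτ', rfl, ht, hv₁, hv₂⟩
    · obtain ⟨hv₁, hv₂⟩ := neg_le_and_nonpos_of_mem_chat hq
      obtain ⟨ht, hv⟩ : t = u ∧ -τ < v := hd.resolve_left fun h => by linarith [h.2]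
      have hc := eq_zero_of_mem_chat hq hv
      rw [ht, sub_eq_zero] at hc
      exact Or.inr ⟨hc.symm, hτ, rfl, ht, hv₁, hv₂⟩
    · rcases hd with ⟨-, hv⟩ | ⟨ht, hv⟩ <;> rcases hq with ⟨hq, hv'⟩ | ⟨-, hv'⟩
      all_goals try linarith
      rw [ht, sub_eq_zero] at hq
      exact Or.inr ⟨hq.symm, hτ, rfl, ht, hv.le, hv'.le⟩
  · rintro (⟨rfl, h⟩ | ⟨rfl, h⟩)
    · rw [Set.mem_inter_iff, mem_coneTranslate_image_iff, sub_zero, mem_dhat_iff, mem_qhat_iff]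
      exact ⟨Or.inl h, Or.inl h⟩
    · exact Kset_subset_dhat_inter_translate_qhat ha h

end ConeSets

/-- For `θ ≥ 0`, `a > 0` with `a < θ` whenever `θ > 0`, and any
`c ∈ S¹_θ`:  `d̂(a) ∩ T_c(q̂(a))` equals `ĉ(a)` if `c = 0`, equals `K(a)` if `c = [a]`,
and is empty for all other `c`. -/
theorem dhat_inter_translate_qhat (θ a : ℝ) (hθ : 0 ≤ θ) (ha : 0 < a)
    (haθ : 0 < θ → a < θ) (c : AddCircle θ) :
    (c = 0 → dhat θ a ∩ (coneTranslate θ c '' qhat θ a) = chat θ a) ∧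
    (c = (a : AddCircle θ) → dhat θ a ∩ (coneTranslate θ c '' qhat θ a) = Kset θ a) ∧
    (c ≠ 0 → c ≠ (a : AddCircle θ) → dhat θ a ∩ (coneTranslate θ c '' qhat θ a) = ∅) := by
  have ha₀ : (a : AddCircle θ) ≠ 0 := AddCircle.coe_ne_zero_of_pos_of_lt hθ ha haθ
  refine ⟨?_, ?_, fun hc₀ hca => ?_⟩
  · rintro rfl
    ext ⟨u, t, v, τ⟩
    simp [mem_dhat_inter_translate_qhat_iff ha.le, ha₀.symm]
  · rintro rfl
    ext ⟨u, t, v, τ⟩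
    simp [mem_dhat_inter_translate_qhat_iff ha.le, ha₀]
  · ext ⟨u, t, v, τ⟩
    simp [mem_dhat_inter_translate_qhat_iff ha.le, hc₀, hca]
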